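/- Let n ∈ ℝ with n ≠ 0 and n ≠ −1, let r, p ∈ ℝ, let I ⊆ ℝ be an open interval, ξ : I → (0,∞) smooth, and let Ξ : I → ℝ satisfy Ξ'(x) = 1/ξ(x). Define f(x) = ξ(x)^{−(3n+4)/(2n+2)}·exp(r·Ξ(x)) and h(x) = (ξ'(x)² − 2ξ(x)ξ''(x) − p)/(4(n+1)ξ(x)²). Let φ : ℝ → (0,∞) be twice differentiable and satisfy the reduced ODE (25) for all ω ∈ ℝ. Define u(t,x) = φ(t − Ξ(x))·ξ(x)^{1/(2n+2)}·exp((r/n)·Ξ(x)). Then u is a positive solution of f(x)u_tt − ∂_x(uⁿu_x) − h(x)u^{n+1} = 0 on ℝ × I. -/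

import Mathlib

/-!
Write `ω = t − Ξ(x)` and `g = ξ^{1/(2n+2)} e^{(r/n)Ξ}`, so that `u = φ(ω) g`. Since `Ξ' = 1/ξ`,
every factor `ξ^a e^{bΞ}` has logarithmic derivative `(aξ' + b)/ξ`. Hence `u_tt = φ'' g`, and
the flux is `uⁿu_x = φⁿ W (φ(ξ'/(2n+2) + r/n) − φ')` with `W = g^{n+1}/ξ = ξ^{−1/2}e^{(n+1)(r/n)Ξ}`,
again of the form `ξ^a e^{bΞ}`. Because `f g = W/ξ`, the left-hand side of the PDE is `W/ξ` times
an expression in `φ, φ', φ''` alone: the choice of exponent `1/(2n+2)` removes `ξ'` from the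
coefficient of `φⁿφ'`, the `ξ'²` and `ξ''` terms cancel against `h`, and what remains is
`−1/(4n²(n+1))` times the left-hand side of (25).
-/

open Real Set

noncomputable section

/-- Partial derivative in the first (time) variable of a function of `(t, x)`. -/
def pt2 (u : ℝ → ℝ → ℝ) : ℝ → ℝ → ℝ := fun t x => deriv (fun s => u s x) t

/-- Partial derivative in the second (space) variable of a function of `(t, x)`. -/
def px2 (u : ℝ → ℝ → ℝ) : ℝ → ℝ → ℝ := fun t x => deriv (fun y => u t y) x

/-- The reduced ODE (25):
`[(4r² − p)n² + 4(2n+1)r²]φ^{n+1} + 4n(n+1)[nφ'' − 2(n+1)rφ']φⁿ + 4n³(n+1)(φ')²φ^{n−1}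
 − 4n²(n+1)φ'' = 0`, for a positive function `φ` with first and second derivatives
`φ'`, `φ''`. -/
def ODE25 (n r p : ℝ) (φ φ' φ'' : ℝ → ℝ) (ω : ℝ) : Prop :=
  ((4 * r ^ 2 - p) * n ^ 2 + 4 * (2 * n + 1) * r ^ 2) * φ ω ^ (n + 1)
    + 4 * n * (n + 1) * (n * φ'' ω - 2 * (n + 1) * r * φ' ω) * φ ω ^ n
    + 4 * n ^ 3 * (n + 1) * (φ' ω) ^ 2 * φ ω ^ (n - 1)
    - 4 * n ^ 2 * (n + 1) * φ'' ω = 0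

theorem hasDerivAt_rpow_mul_exp {ξ Ξ : ℝ → ℝ} {ξ₁ x : ℝ} (a b : ℝ)
    (hξ : HasDerivAt ξ ξ₁ x) (hΞ : HasDerivAt Ξ (1 / ξ x) x) (hpos : 0 < ξ x) :
    HasDerivAt (fun y => ξ y ^ a * exp (b * Ξ y))
      (ξ x ^ a * exp (b * Ξ x) * (a * ξ₁ + b) / ξ x) x := by
  refine ((hξ.rpow_const (p := a) (Or.inl hpos.ne')).mul (hΞ.const_mul b).exp).congr_deriv ?_
  rw [rpow_sub_one hpos.ne']
  field_simp

theorem ContDiffOn.hasDerivAt_deriv {ξ : ℝ → ℝ} {I : Set ℝ} (hξ : ContDiffOn ℝ 2 ξ I)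
    (hI : IsOpen I) {x : ℝ} (hx : x ∈ I) :
    HasDerivAt ξ (deriv ξ x) x ∧ HasDerivAt (deriv ξ) (deriv (deriv ξ) x) x :=
  ⟨((hξ.differentiableOn two_ne_zero).differentiableAt (hI.mem_nhds hx)).hasDerivAt,
    (((hξ.deriv_of_isOpen (m := 1) hI le_rfl).differentiableOn one_ne_zero).differentiableAt
      (hI.mem_nhds hx)).hasDerivAt⟩

theorem hasDerivAt_comp_sub {ψ Ξ ξ : ℝ → ℝ} {ψ₁ t y : ℝ} (hψ : HasDerivAt ψ ψ₁ (t - Ξ y))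
    (hΞ : HasDerivAt Ξ (1 / ξ y) y) :
    HasDerivAt (fun z => ψ (t - Ξ z)) (-ψ₁ / ξ y) y :=
  (hψ.comp y (hΞ.const_sub t)).congr_deriv (by ring)

theorem pt2_of_eq_comp_sub_mul {u : ℝ → ℝ → ℝ} {φ φ' : ℝ → ℝ} {x c k : ℝ}
    (hu : ∀ s, u s x = φ (s - c) * k) (hφ : ∀ ω, HasDerivAt φ (φ' ω) ω) (s : ℝ) :
    pt2 u s x = φ' (s - c) * k := by
  have hder := ((hφ (s - c)).comp s ((hasDerivAt_id s).sub_const c)).mul_const k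
  simp only [pt2, funext hu]
  simpa using hder.deriv

theorem ansatz_rpow_succ {n : ℝ} (hn1 : n + 1 ≠ 0) (b : ℝ) {X : ℝ} (hX : 0 < X) (Z : ℝ) :
    (X ^ (1 / (2 * n + 2)) * exp (b * Z)) ^ (n + 1)
      = X * (X ^ (-1 / 2 : ℝ) * exp ((n + 1) * b * Z)) := by
  rw [mul_rpow (by positivity) (by positivity), ← rpow_mul hX.le, ← exp_mul,
    ← mul_assoc, ← rpow_one_add' hX.le (by norm_num)]
  congr 2
  · field_simp; norm_num
  · ring

theorem ansatz_coeff_mul {n : ℝ} (hn : n ≠ 0) (hn1 : n + 1 ≠ 0) (r : ℝ) {X : ℝ} (hX : 0 < X)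
    (Z : ℝ) :
    X ^ (-(3 * n + 4) / (2 * n + 2)) * exp (r * Z) * (X ^ (1 / (2 * n + 2)) * exp (r / n * Z))
      = X ^ (-1 / 2 : ℝ) * exp ((n + 1) * (r / n) * Z) / X := by
  rw [mul_mul_mul_comm, ← rpow_add hX, ← exp_add, mul_div_right_comm, ← rpow_sub_one hX.ne']
  congr 2
  · field_simp; ring
  · field_simp

-- In this lemma and the next, `Φ₀`, `Φ₁`, `Φ₂` stand for `φ`, `φ'`, `φ''` along `ω = t − Ξ`,
-- whose derivative is `−1/ξ`.
theorem ansatz_flux_eq {n r x : ℝ} {v Φ₀ Φ₁ ξ ξ' Ξ : ℝ → ℝ} (hn1 : n + 1 ≠ 0)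
    (hv : v =ᶠ[nhds x] fun y => Φ₀ y * (ξ y ^ (1 / (2 * n + 2)) * exp (r / n * Ξ y)))
    (hΦ₀pos : 0 < Φ₀ x) (hΦ₀ : HasDerivAt Φ₀ (-Φ₁ x / ξ x) x) (hξpos : 0 < ξ x)
    (hξ : HasDerivAt ξ (ξ' x) x) (hΞ : HasDerivAt Ξ (1 / ξ x) x) :
    v x ^ n * deriv v x = Φ₀ x ^ n * (ξ x ^ (-1 / 2 : ℝ) * exp ((n + 1) * (r / n) * Ξ x))
      * (Φ₀ x * (1 / (2 * n + 2) * ξ' x + r / n) - Φ₁ x) := by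
  set G := ξ x ^ (1 / (2 * n + 2)) * exp (r / n * Ξ x)
  have hGpos : 0 < G := by positivity
  have hGn : G ^ n * G = ξ x * (ξ x ^ (-1 / 2 : ℝ) * exp ((n + 1) * (r / n) * Ξ x)) := by
    rw [← rpow_add_one hGpos.ne']; exact ansatz_rpow_succ hn1 _ hξpos _
  have hder := (hΦ₀.mul (hasDerivAt_rpow_mul_exp _ (r / n) hξ hΞ hξpos)).congr_of_eventuallyEq hv
  calc v x ^ n * deriv v x
      = Φ₀ x ^ n * (G ^ n * G) * (Φ₀ x * (1 / (2 * n + 2) * ξ' x + r / n) - Φ₁ x) / ξ x := by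
        rw [hder.deriv, hv.eq_of_nhds, mul_rpow hΦ₀pos.le hGpos.le]
        ring
    _ = _ := by
        rw [hGn]
        field_simp

theorem hasDerivAt_ansatz_flux {n b x Φ₂ ξ₂ : ℝ} {Φ₀ Φ₁ ξ ξ' Ξ : ℝ → ℝ} (hn1 : n + 1 ≠ 0)
    (hΦ₀pos : 0 < Φ₀ x) (hΦ₀ : HasDerivAt Φ₀ (-Φ₁ x / ξ x) x)
    (hΦ₁ : HasDerivAt Φ₁ (-Φ₂ / ξ x) x) (hξpos : 0 < ξ x) (hξ : HasDerivAt ξ (ξ' x) x)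
    (hξ' : HasDerivAt ξ' ξ₂ x) (hΞ : HasDerivAt Ξ (1 / ξ x) x) :
    HasDerivAt (fun y => Φ₀ y ^ n * (ξ y ^ (-1 / 2 : ℝ) * exp ((n + 1) * b * Ξ y))
        * (Φ₀ y * (1 / (2 * n + 2) * ξ' y + b) - Φ₁ y))
      (ξ x ^ (-1 / 2 : ℝ) * exp ((n + 1) * b * Ξ x) / ξ x
        * (n * Φ₀ x ^ (n - 1) * Φ₁ x ^ 2 - 2 * (n + 1) * b * Φ₀ x ^ n * Φ₁ x + Φ₀ x ^ n * Φ₂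
          + Φ₀ x ^ (n + 1)
            * ((n + 1) * b ^ 2 - ξ' x ^ 2 / (4 * (n + 1)) + ξ x * ξ₂ / (2 * (n + 1))))) x := by
  have hM := (hΦ₀.mul ((hξ'.const_mul (1 / (2 * n + 2))).add_const b)).sub hΦ₁
  refine (((hΦ₀.rpow_const (p := n) (Or.inl hΦ₀pos.ne')).mul
    (hasDerivAt_rpow_mul_exp _ ((n + 1) * b) hξ hΞ hξpos)).mul hM).congr_deriv ?_
  simp only [Pi.mul_apply, Pi.sub_apply]
  rw [rpow_sub_one hΦ₀pos.ne', rpow_add_one hΦ₀pos.ne']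
  field_simp
  ring

theorem nonclassical_reduction_general
    (n : ℝ) (hn : n ≠ 0) (hn1 : n ≠ -1) (r p : ℝ)
    (I : Set ℝ) (hI : IsOpen I)
    (ξ : ℝ → ℝ) (hξ : ContDiffOn ℝ (⊤ : ℕ∞) ξ I) (hξpos : ∀ x ∈ I, 0 < ξ x)
    (Ξ : ℝ → ℝ) (hΞ : ∀ x ∈ I, HasDerivAt Ξ (1 / ξ x) x)
    (f h : ℝ → ℝ)
    (hfdef : ∀ x ∈ I,
      f x = ξ x ^ (-(3 * n + 4) / (2 * n + 2)) * Real.exp (r * Ξ x))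
    (hhdef : ∀ x ∈ I,
      h x = ((deriv ξ x) ^ 2 - 2 * ξ x * deriv (deriv ξ) x - p) / (4 * (n + 1) * (ξ x) ^ 2))
    (φ φ' φ'' : ℝ → ℝ) (hφpos : ∀ ω : ℝ, 0 < φ ω)
    (hd1 : ∀ ω : ℝ, HasDerivAt φ (φ' ω) ω) (hd2 : ∀ ω : ℝ, HasDerivAt φ' (φ'' ω) ω)
    (hODE : ∀ ω : ℝ, ODE25 n r p φ φ' φ'' ω)
    (u : ℝ → ℝ → ℝ)
    (hudef : ∀ t : ℝ, ∀ x ∈ I,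
      u t x = φ (t - Ξ x) * ξ x ^ ((1 : ℝ) / (2 * n + 2)) * Real.exp ((r / n) * Ξ x)) :
    ∀ t : ℝ, ∀ x ∈ I,
      0 < u t x ∧
      f x * pt2 (pt2 u) t x
        - deriv (fun y => (u t y) ^ n * px2 u t y) x
        - h x * (u t x) ^ (n + 1) = 0 := by
  intro t x hx
  have hn1' : n + 1 ≠ 0 := fun h0 => hn1 (eq_neg_of_add_eq_zero_left h0)
  set g : ℝ → ℝ := fun y => ξ y ^ (1 / (2 * n + 2)) * exp (r / n * Ξ y)
  set W : ℝ → ℝ := fun y => ξ y ^ (-1 / 2 : ℝ) * exp ((n + 1) * (r / n) * Ξ y) with hW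
  have hu : ∀ s, ∀ y ∈ I, u s y = φ (s - Ξ y) * g y := fun s y hy => by
    rw [hudef s y hy, mul_assoc]
  have hgpos : 0 < g x := by have := hξpos x hx; positivity
  have hξ2 := fun y (hy : y ∈ I) =>
    (hξ.of_le (WithTop.coe_le_coe.mpr le_top)).hasDerivAt_deriv hI hy
  refine ⟨by rw [hu t x hx]; exact mul_pos (hφpos _) hgpos, ?_⟩
  have htt : pt2 (pt2 u) t x = φ'' (t - Ξ x) * g x :=
    pt2_of_eq_comp_sub_mul (pt2_of_eq_comp_sub_mul (fun s => hu s x hx) hd1) hd2 t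
  have hflux : (fun y => u t y ^ n * px2 u t y) =ᶠ[nhds x] fun y => φ (t - Ξ y) ^ n * W y
      * (φ (t - Ξ y) * (1 / (2 * n + 2) * deriv ξ y + r / n) - φ' (t - Ξ y)) := by
    filter_upwards [hI.mem_nhds hx] with y hy
    exact ansatz_flux_eq (Φ₀ := fun z => φ (t - Ξ z)) (Φ₁ := fun z => φ' (t - Ξ z)) hn1'
      (Filter.eventually_of_mem (hI.mem_nhds hy) (hu t)) (hφpos _)
      (hasDerivAt_comp_sub (hd1 _) (hΞ y hy)) (hξpos y hy) (hξ2 y hy).1 (hΞ y hy)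
  have hF := hasDerivAt_ansatz_flux (Φ₀ := fun z => φ (t - Ξ z)) (Φ₁ := fun z => φ' (t - Ξ z))
    (b := r / n) hn1' (hφpos _) (hasDerivAt_comp_sub (hd1 _) (hΞ x hx))
    (hasDerivAt_comp_sub (hd2 _) (hΞ x hx)) (hξpos x hx) (hξ2 x hx).1 (hξ2 x hx).2 (hΞ x hx)
  have hfg : f x * g x = W x / ξ x := by
    rw [hfdef x hx]; exact ansatz_coeff_mul hn hn1' r (hξpos x hx) (Ξ x)
  have hode := hODE (t - Ξ x)
  unfold ODE25 at hode
  rw [htt, hflux.deriv_eq, hF.deriv, hhdef x hx, hu t x hx, mul_rpow (hφpos _).le hgpos.le,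
    ansatz_rpow_succ hn1' _ (hξpos x hx), mul_left_comm, hfg]
  linear_combination (norm := skip) (-W x / (4 * n ^ 2 * (n + 1) * ξ x)) * hode
  simp only [hW]
  field_simp [(hξpos x hx).ne']
  ring

/-- The ansatz `u = φ(t − Ξ(x)) ξ^{1/(2n+2)} e^{(r/n)Ξ}` built from the
reduction operator `∂_t + ξ(x)∂_x + (r/n + ξ_x/(2n+2))u∂_u` turns any positive solution
`φ` of the reduced ODE (25) into a positive solution of
`f u_tt − (uⁿu_x)_x − h u^{n+1} = 0` with `f = ξ^{−(3n+4)/(2n+2)}e^{rΞ}`,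
`h = (ξ'² − 2ξξ'' − p)/(4(n+1)ξ²)`. -/
theorem nonclassical_reduction
    (n : ℝ) (hn : n ≠ 0) (hn1 : n ≠ -1) (r p : ℝ)
    (I : Set ℝ) (hI : IsOpen I) (hIc : I.OrdConnected)
    (ξ : ℝ → ℝ) (hξ : ContDiffOn ℝ (⊤ : ℕ∞) ξ I) (hξpos : ∀ x ∈ I, 0 < ξ x)
    (Ξ : ℝ → ℝ) (hΞ : ∀ x ∈ I, HasDerivAt Ξ (1 / ξ x) x)
    (f h : ℝ → ℝ)
    (hfdef : ∀ x ∈ I,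
      f x = ξ x ^ (-(3 * n + 4) / (2 * n + 2)) * Real.exp (r * Ξ x))
    (hhdef : ∀ x ∈ I,
      h x = ((deriv ξ x) ^ 2 - 2 * ξ x * deriv (deriv ξ) x - p) / (4 * (n + 1) * (ξ x) ^ 2))
    (φ φ' φ'' : ℝ → ℝ) (hφpos : ∀ ω : ℝ, 0 < φ ω)
    (hd1 : ∀ ω : ℝ, HasDerivAt φ (φ' ω) ω) (hd2 : ∀ ω : ℝ, HasDerivAt φ' (φ'' ω) ω)
    (hODE : ∀ ω : ℝ, ODE25 n r p φ φ' φ'' ω)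
    (u : ℝ → ℝ → ℝ)
    (hudef : ∀ t : ℝ, ∀ x ∈ I,
      u t x = φ (t - Ξ x) * ξ x ^ ((1 : ℝ) / (2 * n + 2)) * Real.exp ((r / n) * Ξ x)) :
    ∀ t : ℝ, ∀ x ∈ I,
      0 < u t x ∧
      f x * pt2 (pt2 u) t x
        - deriv (fun y => (u t y) ^ n * px2 u t y) x
        - h x * (u t x) ^ (n + 1) = 0 :=
  nonclassical_reduction_general n hn hn1 r p I hI ξ hξ hξpos Ξ hΞ f h hfdef hhdef φ φ' φ'' hφpos
    hd1 hd2 hODE u hudef
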